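/- For every initial distribution p on ℝ with ∫ w dp < ∞ and every threshold z ∈ ℝ: F(p,z) − F(p,z⁻) = −f(z,z⁻)·μ_p^z{z} = −f(z,z)·μ_p^{z⁻}{z}, and G(p,z) − G(p,z⁻) = −g(z,z⁻)·μ_p^z{z} = −g(z,z)·μ_p^{z⁻}{z}. -/

import Mathlib

open MeasureTheory ProbabilityTheory Filter Topology Set

noncomputable section

/-- A restless bandit project: the model data (discount factor `β`, passive/active
Markov transition kernels `κ false`/`κ true`, reward `r` and resource consumption `c`),
Assumption 1 (the weighted sup-norm conditions for weight `w` and constants `M`, `γ`),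
together with the threshold-policy performance metrics `F`, `G` (for `z`-policies,
active iff `x > z`), `Fm`, `Gm` (for `z⁻`-policies, active iff `x ≥ z`), and the
optimal value function `V lam` of the `lam`-price problem, each of which is the
(unique) `w`-bounded measurable solution of its fixed-point equation. -/
structure Bandit where
  β : ℝ
  κ : Bool → Kernel ℝ ℝ
  r : ℝ → Bool → ℝ
  c : ℝ → Bool → ℝ
  w : ℝ → ℝ
  M : ℝ
  γ : ℝ
  F : ℝ → EReal → ℝ
  G : ℝ → EReal → ℝ
  Fm : ℝ → EReal → ℝ
  Gm : ℝ → EReal → ℝ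
  V : ℝ → ℝ → ℝ
  hβ0 : 0 ≤ β
  hβ1 : β < 1
  hκ : ∀ a, IsMarkovKernel (κ a)
  hr_cont : ∀ a, Continuous fun x => r x a
  hc_cont : ∀ a, Continuous fun x => c x a
  hc0 : ∀ x, 0 ≤ c x false
  hc01 : ∀ x, c x false < c x true
  hw_meas : Measurable w
  hw_one : ∀ x, 1 ≤ w x
  hM : 0 < M
  hβγ : β ≤ γ
  hγ1 : γ < 1
  hr_bd : ∀ x a, |r x a| ≤ M * w x
  hc_bd : ∀ x a, c x a ≤ M * w x
  hw_int : ∀ a x, Integrable w (κ a x)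
  hw_drift : ∀ a x, β * ∫ y, w y ∂(κ a x) ≤ γ * w x
  hF_meas : ∀ z, Measurable fun x => F x z
  hG_meas : ∀ z, Measurable fun x => G x z
  hFm_meas : ∀ z, Measurable fun x => Fm x z
  hGm_meas : ∀ z, Measurable fun x => Gm x z
  hV_meas : ∀ lam, Measurable (V lam)
  hF_bdd : ∀ z, ∃ C, ∀ x, |F x z| ≤ C * w x
  hG_bdd : ∀ z, ∃ C, ∀ x, |G x z| ≤ C * w x
  hFm_bdd : ∀ z, ∃ C, ∀ x, |Fm x z| ≤ C * w x
  hGm_bdd : ∀ z, ∃ C, ∀ x, |Gm x z| ≤ C * w x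
  hV_bdd : ∀ lam, ∃ C, ∀ x, |V lam x| ≤ C * w x
  hF_eq : ∀ x z, F x z =
    r x (decide (z < (x : EReal))) +
      β * ∫ y, F y z ∂(κ (decide (z < (x : EReal))) x)
  hG_eq : ∀ x z, G x z =
    c x (decide (z < (x : EReal))) +
      β * ∫ y, G y z ∂(κ (decide (z < (x : EReal))) x)
  hFm_eq : ∀ x z, Fm x z =
    r x (decide (z ≤ (x : EReal))) +
      β * ∫ y, Fm y z ∂(κ (decide (z ≤ (x : EReal))) x)
  hGm_eq : ∀ x z, Gm x z =
    c x (decide (z ≤ (x : EReal))) +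
      β * ∫ y, Gm y z ∂(κ (decide (z ≤ (x : EReal))) x)
  hV_eq : ∀ lam x, V lam x =
    max (r x false - lam * c x false + β * ∫ y, V lam y ∂(κ false x))
        (r x true - lam * c x true + β * ∫ y, V lam y ∂(κ true x))

/-- `ν` is the Lebesgue–Stieltjes measure of the (bounded nonincreasing
right-continuous) function `h`: `ν(z₁,z₂] = h z₁ - h z₂`. -/
def IsLSMeasureOfAnti (h : ℝ → ℝ) (ν : Measure ℝ) : Prop :=
  ∀ z₁ z₂ : ℝ, z₁ ≤ z₂ → ν (Set.Ioc z₁ z₂) = ENNReal.ofReal (h z₁ - h z₂)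

/-- `ν` is the Lebesgue–Stieltjes measure of the (bounded nondecreasing
right-continuous) function `h`: `ν(z₁,z₂] = h z₂ - h z₁`. -/
def IsLSMeasureOfMono (h : ℝ → ℝ) (ν : Measure ℝ) : Prop :=
  ∀ z₁ z₂ : ℝ, z₁ ≤ z₂ → ν (Set.Ioc z₁ z₂) = ENNReal.ofReal (h z₂ - h z₁)

/-- The real interval `(z₁, z₂] ⊆ ℝ` with extended-real endpoints. -/
def iocR (z₁ z₂ : EReal) : Set ℝ := {y : ℝ | z₁ < (y : EReal) ∧ (y : EReal) ≤ z₂}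

/-- `t`-step distribution of the Markov chain with kernel `κ` and initial law `p`. -/
def kerIter (κ : Kernel ℝ ℝ) : ℕ → Measure ℝ → Measure ℝ
  | 0, p => p
  | (t + 1), p => (kerIter κ t p).bind fun x => κ x

namespace Bandit

variable (P : Bandit)

/-- Marginal reward metric `f(x,z)` of the `z`-policy. -/
def f (x : ℝ) (z : EReal) : ℝ :=
  (P.r x true - P.r x false) +
    P.β * ((∫ y, P.F y z ∂(P.κ true x)) - ∫ y, P.F y z ∂(P.κ false x))

/-- Marginal resource metric `g(x,z)` of the `z`-policy. -/
def g (x : ℝ) (z : EReal) : ℝ :=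
  (P.c x true - P.c x false) +
    P.β * ((∫ y, P.G y z ∂(P.κ true x)) - ∫ y, P.G y z ∂(P.κ false x))

/-- Marginal reward metric `f(x,z⁻)` of the `z⁻`-policy. -/
def fm (x : ℝ) (z : EReal) : ℝ :=
  (P.r x true - P.r x false) +
    P.β * ((∫ y, P.Fm y z ∂(P.κ true x)) - ∫ y, P.Fm y z ∂(P.κ false x))

/-- Marginal resource metric `g(x,z⁻)` of the `z⁻`-policy. -/
def gm (x : ℝ) (z : EReal) : ℝ :=
  (P.c x true - P.c x false) +
    P.β * ((∫ y, P.Gm y z ∂(P.κ true x)) - ∫ y, P.Gm y z ∂(P.κ false x))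

/-- Marginal productivity metric `m(x,z) = f(x,z)/g(x,z)`. -/
def m (x : ℝ) (z : EReal) : ℝ := P.f x z / P.g x z

/-- Marginal productivity metric `m(x,z⁻) = f(x,z⁻)/g(x,z⁻)`. -/
def mm (x : ℝ) (z : EReal) : ℝ := P.fm x z / P.gm x z

/-- The marginal productivity (MP) index `m*(x) = m(x,x)`. -/
def mStar (x : ℝ) : ℝ := P.m x (x : EReal)

/-- The active action is `P_lam`-optimal at `x`. -/
def ActOpt (lam x : ℝ) : Prop :=
  P.r x false - lam * P.c x false + P.β * ∫ y, P.V lam y ∂(P.κ false x) ≤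
    P.r x true - lam * P.c x true + P.β * ∫ y, P.V lam y ∂(P.κ true x)

/-- The passive action is `P_lam`-optimal at `x`. -/
def PassOpt (lam x : ℝ) : Prop :=
  P.r x true - lam * P.c x true + P.β * ∫ y, P.V lam y ∂(P.κ true x) ≤
    P.r x false - lam * P.c x false + P.β * ∫ y, P.V lam y ∂(P.κ false x)

/-- The project is indexable with index `ν`. -/
def Indexable (ν : ℝ → ℝ) : Prop :=
  ∀ lam x, (P.ActOpt lam x ↔ lam ≤ ν x) ∧ (P.PassOpt lam x ↔ ν x ≤ lam)

/-- The `z`-policy is `P_lam`-optimal. -/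
def ZPolicyOpt (z : EReal) (lam : ℝ) : Prop :=
  ∀ x, P.F x z - lam * P.G x z = P.V lam x

/-- The `z⁻`-policy is `P_lam`-optimal. -/
def ZmPolicyOpt (z : EReal) (lam : ℝ) : Prop :=
  ∀ x, P.Fm x z - lam * P.Gm x z = P.V lam x

/-- The project is strongly threshold-indexable with index `ν`. -/
def StronglyThresholdIndexable (ν : ℝ → ℝ) : Prop :=
  P.Indexable ν ∧
    ∀ lam : ℝ, ∃ z : EReal, P.ZPolicyOpt z lam ∧ P.ZmPolicyOpt z lam

/-- PCL-indexability condition (PCLI1). -/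
def PCLI1 : Prop := ∀ (x : ℝ) (z : EReal), 0 < P.g x z

/-- PCL-indexability condition (PCLI2). -/
def PCLI2 : Prop :=
  Monotone P.mStar ∧ Continuous P.mStar ∧ BddBelow (Set.range P.mStar)

/-- PCL-indexability condition (PCLI3). -/
def PCLI3 : Prop :=
  ∀ x : ℝ, ∀ ν : Measure ℝ, IsLSMeasureOfAnti (fun z : ℝ => P.G x z) ν →
    ∀ z₁ z₂ : ℝ, z₁ < z₂ →
      P.F x z₂ - P.F x z₁ = -∫ z in Set.Ioc z₁ z₂, P.mStar z ∂ν

/-- The project is PCL-indexable. -/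
def PCLIndexable : Prop := P.PCLI1 ∧ P.PCLI2 ∧ P.PCLI3

/-- Reward metric with initial distribution `p`. -/
def Fp (p : Measure ℝ) (z : EReal) : ℝ := ∫ x, P.F x z ∂p

/-- Resource metric with initial distribution `p`. -/
def Gp (p : Measure ℝ) (z : EReal) : ℝ := ∫ x, P.G x z ∂p

/-- `z⁻`-policy reward metric with initial distribution `p`. -/
def Fmp (p : Measure ℝ) (z : EReal) : ℝ := ∫ x, P.Fm x z ∂p

/-- `z⁻`-policy resource metric with initial distribution `p`. -/
def Gmp (p : Measure ℝ) (z : EReal) : ℝ := ∫ x, P.Gm x z ∂p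

/-- An admissible initial distribution: a probability measure with `∫ w dp < ∞`. -/
def IsInitDist (p : Measure ℝ) : Prop :=
  IsProbabilityMeasure p ∧ Integrable P.w p

/-- The transition kernel of the `z`-policy (active iff `x > z`). -/
def thrKer (z : EReal) : Kernel ℝ ℝ :=
  haveI : DecidablePred (· ∈ {x : ℝ | z < (x : EReal)}) := Classical.decPred _
  Kernel.piecewise
    (show MeasurableSet {x : ℝ | z < (x : EReal)} from
      measurable_coe_real_ereal measurableSet_Ioi)
    (P.κ true) (P.κ false)

/-- The transition kernel of the `z⁻`-policy (active iff `x ≥ z`). -/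
def thrKerM (z : EReal) : Kernel ℝ ℝ :=
  haveI : DecidablePred (· ∈ {x : ℝ | z ≤ (x : EReal)}) := Classical.decPred _
  Kernel.piecewise
    (show MeasurableSet {x : ℝ | z ≤ (x : EReal)} from
      measurable_coe_real_ereal measurableSet_Ici)
    (P.κ true) (P.κ false)

/-- The (discounted) state occupation measure `μ_p^z` of the `z`-policy. -/
def occ (z : EReal) (p : Measure ℝ) : Measure ℝ :=
  Measure.sum fun t : ℕ => ENNReal.ofReal (P.β ^ t) • kerIter (P.thrKer z) t p

/-- The (discounted) state occupation measure `μ_p^{z⁻}` of the `z⁻`-policy. -/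
def occM (z : EReal) (p : Measure ℝ) : Measure ℝ :=
  Measure.sum fun t : ℕ => ENNReal.ofReal (P.β ^ t) • kerIter (P.thrKerM z) t p

end Bandit

/-- Finite-horizon reward metric `F_k(x,z)` (value iteration). -/
def Bandit.Fk (P : Bandit) : ℕ → ℝ → EReal → ℝ
  | 0, x, z => P.r x (decide (z < (x : EReal)))
  | (k + 1), x, z =>
      P.r x (decide (z < (x : EReal))) +
        P.β * ∫ y, Bandit.Fk P k y z ∂(P.κ (decide (z < (x : EReal))) x)

/-- Finite-horizon resource metric `G_k(x,z)` (value iteration). -/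
def Bandit.Gk (P : Bandit) : ℕ → ℝ → EReal → ℝ
  | 0, x, z => P.c x (decide (z < (x : EReal)))
  | (k + 1), x, z =>
      P.c x (decide (z < (x : EReal))) +
        P.β * ∫ y, Bandit.Gk P k y z ∂(P.κ (decide (z < (x : EReal))) x)

/-- Finite-horizon marginal reward metric `f_k(x,z)`. -/
def Bandit.fk (P : Bandit) : ℕ → ℝ → EReal → ℝ
  | 0, x, _ => P.r x true - P.r x false
  | (k + 1), x, z =>
      (P.r x true - P.r x false) +
        P.β * ((∫ y, P.Fk k y z ∂(P.κ true x)) - ∫ y, P.Fk k y z ∂(P.κ false x))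

/-- Finite-horizon marginal resource metric `g_k(x,z)`. -/
def Bandit.gk (P : Bandit) : ℕ → ℝ → EReal → ℝ
  | 0, x, _ => P.c x true - P.c x false
  | (k + 1), x, z =>
      (P.c x true - P.c x false) +
        P.β * ((∫ y, P.Gk k y z ∂(P.κ true x)) - ∫ y, P.Gk k y z ∂(P.κ false x))

namespace Bandit

variable (P : Bandit)

/-- Finite-horizon MP metric `m_k(x,z)`. -/
def mk' (k : ℕ) (x : ℝ) (z : EReal) : ℝ := P.fk k x z / P.gk k x z

/-- Finite-horizon MP index `m*_k(x)`. -/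
def mkStar (k : ℕ) (x : ℝ) : ℝ := P.mk' k x (x : EReal)

/-- `g̲(x,z) = inf_k g_k(x,z)`. -/
def gbar (x : ℝ) (z : EReal) : ℝ := ⨅ k : ℕ, P.gk k x z

end Bandit

/-! The difference `D := F(·,z) - F(·,z⁻)` solves a policy-evaluation equation `D = h + β κ D`
for either threshold kernel `κ`, with a reward `h` supported on `{z}`: the two policies act alike
off `z`, and at `z` the mismatch of their Bellman equations is minus the marginal metric of the
other policy. Unrolling the equation along the chain started at `p` gives
`∫ D dp = ∑ₜ βᵗ E h(Xₜ) = h(z) μ_p{z}`; the remainder `βᵗ E D(Xₜ)` vanishes because the drift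
condition bounds `βᵗ E w(Xₜ)` by `γᵗ ∫ w dp`. The same computation applies to `G`. -/

open scoped ENNReal

lemma MeasureTheory.Measure.integral_bind {α β : Type*} [MeasurableSpace α] [MeasurableSpace β]
    {μ : Measure α} {κ : Kernel α β} {f : β → ℝ} (hf : Integrable f (μ.bind κ)) :
    ∫ y, f y ∂(μ.bind κ) = ∫ x, ∫ y, f y ∂κ x ∂μ := by
  change Integrable f (κ ∘ₘ μ) at hf
  rw [Measure.comp_eq_comp_const_apply] at hf ⊢
  rw [Kernel.integral_comp hf, Kernel.const_apply]

lemma integrable_of_abs_le_const_mul {α : Type*} [MeasurableSpace α] {μ : Measure α}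
    {u w : α → ℝ} {C : ℝ} (hu : Measurable u) (hb : ∀ x, |u x| ≤ C * w x)
    (hw : Integrable w μ) : Integrable u μ :=
  (hw.const_mul C).mono' hu.aestronglyMeasurable (.of_forall hb)

lemma hasSum_of_eq_add_succ {a x : ℕ → ℝ} (ha : Summable a) (hstep : ∀ t, x t = a t + x (t + 1))
    (hx : Tendsto x atTop (𝓝 0)) : HasSum a (x 0) := by
  refine ha.hasSum_iff_tendsto_nat.2 ?_
  have hpartial : ∀ n, ∑ t ∈ Finset.range n, a t = x 0 - x n := fun n => by
    rw [← Finset.sum_range_sub']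
    exact Finset.sum_congr rfl fun t _ => by linarith [hstep t]
  simpa [hpartial] using (tendsto_const_nhds (x := x 0)).sub hx

-- The `t`-th summand of the occupation measures `Bandit.occ` and `Bandit.occM`.
def discountedLaw (κ : Kernel ℝ ℝ) (β : ℝ) (p : Measure ℝ) (t : ℕ) : Measure ℝ :=
  ENNReal.ofReal (β ^ t) • kerIter κ t p

section DiscountedLaw

variable {κ : Kernel ℝ ℝ} {β γ : ℝ} {p : Measure ℝ} {w : ℝ → ℝ}

@[simp]
lemma discountedLaw_zero : discountedLaw κ β p 0 = p := by
  simp [discountedLaw, kerIter]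

lemma discountedLaw_succ (hβ : 0 ≤ β) (t : ℕ) :
    discountedLaw κ β p (t + 1) = ENNReal.ofReal β • (discountedLaw κ β p t).bind κ := by
  rw [discountedLaw, discountedLaw, kerIter, Measure.bind_smul, smul_smul, pow_succ',
    ENNReal.ofReal_mul hβ]

lemma lintegral_discountedLaw_succ (hβ : 0 ≤ β) {f : ℝ → ℝ≥0∞} (hf : Measurable f) (t : ℕ) :
    ∫⁻ y, f y ∂discountedLaw κ β p (t + 1) =
      ∫⁻ x, ENNReal.ofReal β * ∫⁻ y, f y ∂κ x ∂discountedLaw κ β p t := by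
  rw [discountedLaw_succ hβ, lintegral_smul_measure,
    Measure.lintegral_bind κ.aemeasurable hf.aemeasurable,
    lintegral_const_mul' _ _ ENNReal.ofReal_ne_top, smul_eq_mul]

lemma integral_discountedLaw_succ (hβ : 0 ≤ β) {f : ℝ → ℝ} (t : ℕ)
    (hf : Integrable f (discountedLaw κ β p (t + 1))) :
    ∫ y, f y ∂discountedLaw κ β p (t + 1) =
      ∫ x, β * ∫ y, f y ∂κ x ∂discountedLaw κ β p t := by
  rw [discountedLaw_succ hβ] at hf ⊢
  rw [integral_smul_measure, ENNReal.toReal_ofReal hβ, integral_const_mul, smul_eq_mul]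
  rcases hβ.eq_or_lt with rfl | hβ
  · simp
  · rw [integrable_smul_measure (by simpa using hβ) ENNReal.ofReal_ne_top] at hf
    rw [Measure.integral_bind hf]

lemma lintegral_discountedLaw_le (hβ : 0 ≤ β) (hw : Measurable w) (hw0 : ∀ x, 0 ≤ w x)
    (hκw : ∀ x, Integrable w (κ x)) (hdrift : ∀ x, β * ∫ y, w y ∂κ x ≤ γ * w x) (t : ℕ) :
    ∫⁻ y, ENNReal.ofReal (w y) ∂discountedLaw κ β p t ≤
      ENNReal.ofReal γ ^ t * ∫⁻ y, ENNReal.ofReal (w y) ∂p := by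
  have hdrift' : ∀ x, ENNReal.ofReal β * ∫⁻ y, ENNReal.ofReal (w y) ∂κ x ≤
      ENNReal.ofReal γ * ENNReal.ofReal (w x) := fun x => by
    rw [← ofReal_integral_eq_lintegral_ofReal (hκw x) (.of_forall hw0),
      ← ENNReal.ofReal_mul hβ]
    exact (ENNReal.ofReal_le_ofReal (hdrift x)).trans_eq (ENNReal.ofReal_mul' (hw0 x))
  induction t with
  | zero => simp
  | succ t ih =>
    calc ∫⁻ y, ENNReal.ofReal (w y) ∂discountedLaw κ β p (t + 1)
        ≤ ∫⁻ x, ENNReal.ofReal γ * ENNReal.ofReal (w x) ∂discountedLaw κ β p t := by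
          rw [lintegral_discountedLaw_succ hβ hw.ennreal_ofReal t]
          exact lintegral_mono hdrift'
      _ ≤ ENNReal.ofReal γ ^ (t + 1) * ∫⁻ y, ENNReal.ofReal (w y) ∂p := by
          rw [lintegral_const_mul' _ _ ENNReal.ofReal_ne_top, pow_succ', mul_assoc]
          gcongr

lemma measure_le_lintegral_ofReal {μ : Measure ℝ} (hw1 : ∀ x, 1 ≤ w x) (s : Set ℝ) :
    μ s ≤ ∫⁻ y, ENNReal.ofReal (w y) ∂μ :=
  calc μ s ≤ μ univ := measure_mono (subset_univ s)
    _ = ∫⁻ _, 1 ∂μ := lintegral_one.symm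
    _ ≤ ∫⁻ y, ENNReal.ofReal (w y) ∂μ := lintegral_mono fun y => ENNReal.one_le_ofReal.2 (hw1 y)

lemma integrable_discountedLaw (hβ : 0 ≤ β) (hw : Measurable w) (hw0 : ∀ x, 0 ≤ w x)
    (hκw : ∀ x, Integrable w (κ x)) (hdrift : ∀ x, β * ∫ y, w y ∂κ x ≤ γ * w x)
    (hpw : Integrable w p) (t : ℕ) : Integrable w (discountedLaw κ β p t) := by
  refine ⟨hw.aestronglyMeasurable, (hasFiniteIntegral_iff_ofReal (.of_forall hw0)).2 ?_⟩
  exact (lintegral_discountedLaw_le hβ hw hw0 hκw hdrift t).trans_lt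
    (ENNReal.mul_lt_top (ENNReal.pow_lt_top ENNReal.ofReal_lt_top) hpw.lintegral_lt_top)

lemma integral_discountedLaw_le (hβ : 0 ≤ β) (hγ : 0 ≤ γ) (hw : Measurable w)
    (hw0 : ∀ x, 0 ≤ w x) (hκw : ∀ x, Integrable w (κ x))
    (hdrift : ∀ x, β * ∫ y, w y ∂κ x ≤ γ * w x) (hpw : Integrable w p) (t : ℕ) :
    ∫ y, w y ∂discountedLaw κ β p t ≤ γ ^ t * ∫ y, w y ∂p := by
  rw [integral_eq_lintegral_of_nonneg_ae (.of_forall hw0) hw.aestronglyMeasurable,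
    integral_eq_lintegral_of_nonneg_ae (.of_forall hw0) hw.aestronglyMeasurable]
  calc _ ≤ (ENNReal.ofReal γ ^ t * ∫⁻ y, ENNReal.ofReal (w y) ∂p).toReal :=
        ENNReal.toReal_mono (ENNReal.mul_ne_top (ENNReal.pow_ne_top ENNReal.ofReal_ne_top)
          hpw.lintegral_lt_top.ne) (lintegral_discountedLaw_le hβ hw hw0 hκw hdrift t)
    _ = _ := by rw [ENNReal.toReal_mul, ENNReal.toReal_pow, ENNReal.toReal_ofReal hγ]

lemma tendsto_integral_discountedLaw (hβ : 0 ≤ β) (hγ0 : 0 ≤ γ) (hγ1 : γ < 1)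
    (hw : Measurable w) (hw1 : ∀ x, 1 ≤ w x) (hκw : ∀ x, Integrable w (κ x))
    (hdrift : ∀ x, β * ∫ y, w y ∂κ x ≤ γ * w x) (hpw : Integrable w p)
    {D : ℝ → ℝ} {C : ℝ} (hDb : ∀ x, |D x| ≤ C * w x) :
    Tendsto (fun t => ∫ y, D y ∂discountedLaw κ β p t) atTop (𝓝 0) := by
  have hw0 : ∀ x, 0 ≤ w x := fun x => zero_le_one.trans (hw1 x)
  have hC : 0 ≤ C := nonneg_of_mul_nonneg_left ((abs_nonneg _).trans (hDb 0)) (by linarith [hw1 0])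
  have hbound : ∀ t, ‖∫ y, D y ∂discountedLaw κ β p t‖ ≤ C * (∫ y, w y ∂p) * γ ^ t := fun t =>
    calc ‖∫ y, D y ∂discountedLaw κ β p t‖
        ≤ ∫ y, C * w y ∂discountedLaw κ β p t :=
          norm_integral_le_of_norm_le
            ((integrable_discountedLaw hβ hw hw0 hκw hdrift hpw t).const_mul C) (.of_forall hDb)
      _ ≤ C * (γ ^ t * ∫ y, w y ∂p) := by
          rw [integral_const_mul]
          exact mul_le_mul_of_nonneg_left
            (integral_discountedLaw_le hβ hγ0 hw hw0 hκw hdrift hpw t) hC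
      _ = C * (∫ y, w y ∂p) * γ ^ t := by ring
  refine squeeze_zero_norm hbound ?_
  simpa using (tendsto_pow_atTop_nhds_zero_of_lt_one hγ0 hγ1).const_mul (C * ∫ y, w y ∂p)

lemma sum_discountedLaw_ne_top (hβ : 0 ≤ β) (hγ1 : γ < 1) (hw : Measurable w)
    (hw1 : ∀ x, 1 ≤ w x) (hκw : ∀ x, Integrable w (κ x))
    (hdrift : ∀ x, β * ∫ y, w y ∂κ x ≤ γ * w x) (hpw : Integrable w p) (s : Set ℝ) :
    ∑' t, discountedLaw κ β p t s ≠ ∞ := by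
  have hw0 : ∀ x, 0 ≤ w x := fun x => zero_le_one.trans (hw1 x)
  refine ne_top_of_le_ne_top ?_ (ENNReal.tsum_le_tsum fun t =>
    (measure_le_lintegral_ofReal hw1 s).trans (lintegral_discountedLaw_le hβ hw hw0 hκw hdrift t))
  rw [ENNReal.tsum_mul_right, ENNReal.tsum_geometric]
  exact ENNReal.mul_ne_top (ENNReal.inv_ne_top.2 (tsub_pos_of_lt (ENNReal.ofReal_lt_one.2 hγ1)).ne')
    hpw.lintegral_lt_top.ne

theorem integral_eq_mul_sum_discountedLaw (hβ : 0 ≤ β) (hγ0 : 0 ≤ γ) (hγ1 : γ < 1)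
    (hw : Measurable w) (hw1 : ∀ x, 1 ≤ w x) (hκw : ∀ x, Integrable w (κ x))
    (hdrift : ∀ x, β * ∫ y, w y ∂κ x ≤ γ * w x) (hpw : Integrable w p)
    {D : ℝ → ℝ} (hD : Measurable D) {C : ℝ} (hDb : ∀ x, |D x| ≤ C * w x)
    {s : Set ℝ} (hs : MeasurableSet s) {c : ℝ}
    (hDeq : ∀ x, D x = s.indicator (fun _ => c) x + β * ∫ y, D y ∂κ x) :
    ∫ x, D x ∂p = c * (Measure.sum (discountedLaw κ β p) s).toReal := by
  have hw0 : ∀ x, 0 ≤ w x := fun x => zero_le_one.trans (hw1 x)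
  have hDint : ∀ t, Integrable D (discountedLaw κ β p t) := fun t =>
    integrable_of_abs_le_const_mul hD hDb (integrable_discountedLaw hβ hw hw0 hκw hdrift hpw t)
  have hfin := sum_discountedLaw_ne_top hβ hγ1 hw hw1 hκw hdrift hpw s
  have hstep : ∀ t, ∫ x, D x ∂discountedLaw κ β p t =
      c * (discountedLaw κ β p t s).toReal + ∫ x, D x ∂discountedLaw κ β p (t + 1) := fun t => by
    have hshift : (fun x => β * ∫ y, D y ∂κ x) = fun x => D x - s.indicator (fun _ => c) x :=
      funext fun x => eq_sub_of_add_eq' (hDeq x).symm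
    rw [integral_discountedLaw_succ hβ t (hDint _), hshift,
      integral_sub (hDint t) ((integrable_indicator_iff hs).2
        (integrableOn_const (ENNReal.ne_top_of_tsum_ne_top hfin t))), integral_indicator_const c hs,
      smul_eq_mul, measureReal_def]
    ring
  have hsum := hasSum_of_eq_add_succ ((ENNReal.summable_toReal hfin).mul_left c) hstep
    (tendsto_integral_discountedLaw hβ hγ0 hγ1 hw hw1 hκw hdrift hpw hDb)
  rw [discountedLaw_zero] at hsum
  rw [hsum.tsum_eq.symm, tsum_mul_left, Measure.sum_apply _ hs,
    ENNReal.tsum_toReal_eq (ENNReal.ne_top_of_tsum_ne_top hfin)]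

end DiscountedLaw

namespace Bandit

variable (P : Bandit)

-- `P.f x z = P.marginal P.r (P.F · z) x`, and likewise for `g`, `fm`, `gm`.
def marginal (R : ℝ → Bool → ℝ) (u : ℝ → ℝ) (x : ℝ) : ℝ :=
  (R x true - R x false) + P.β * ((∫ y, u y ∂(P.κ true x)) - ∫ y, u y ∂(P.κ false x))

lemma thrKer_apply (z : EReal) (x : ℝ) : P.thrKer z x = P.κ (decide (z < (x : EReal))) x := by
  by_cases h : z < (x : EReal) <;> simp [thrKer, Kernel.piecewise_apply, h]

lemma thrKerM_apply (z : EReal) (x : ℝ) : P.thrKerM z x = P.κ (decide (z ≤ (x : EReal))) x := by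
  by_cases h : z ≤ (x : EReal) <;> simp [thrKerM, Kernel.piecewise_apply, h]

lemma decide_coe_lt_eq_decide_coe_le {x z : ℝ} (hx : x ≠ z) :
    decide ((z : EReal) < x) = decide ((z : EReal) ≤ x) := by
  refine decide_eq_decide.2 ?_
  rw [EReal.coe_lt_coe_iff, EReal.coe_le_coe_iff]
  exact ⟨le_of_lt, fun h => h.lt_of_ne hx.symm⟩

lemma sub_eq_indicator_add_thrKer {R : ℝ → Bool → ℝ} {u v : ℝ → ℝ} {z : ℝ}
    (hu : ∀ a x, Integrable u (P.κ a x)) (hv : ∀ a x, Integrable v (P.κ a x))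
    (hueq : ∀ x, u x = R x (decide ((z : EReal) < x)) +
      P.β * ∫ y, u y ∂(P.κ (decide ((z : EReal) < x)) x))
    (hveq : ∀ x, v x = R x (decide ((z : EReal) ≤ x)) +
      P.β * ∫ y, v y ∂(P.κ (decide ((z : EReal) ≤ x)) x)) (x : ℝ) :
    u x - v x = ({z} : Set ℝ).indicator (fun _ => -P.marginal R v z) x +
      P.β * ∫ y, u y - v y ∂(P.thrKer z x) := by
  rw [thrKer_apply, integral_sub (hu _ _) (hv _ _), hueq x, hveq x]
  by_cases hx : x = z
  · subst hx
    simp only [lt_self_iff_false, decide_false, le_refl, decide_true, marginal,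
      Set.indicator_of_mem (Set.mem_singleton _)]
    ring
  · rw [Set.indicator_of_notMem (Set.mem_singleton_iff.not.2 hx),
      decide_coe_lt_eq_decide_coe_le hx]
    ring

lemma sub_eq_indicator_add_thrKerM {R : ℝ → Bool → ℝ} {u v : ℝ → ℝ} {z : ℝ}
    (hu : ∀ a x, Integrable u (P.κ a x)) (hv : ∀ a x, Integrable v (P.κ a x))
    (hueq : ∀ x, u x = R x (decide ((z : EReal) < x)) +
      P.β * ∫ y, u y ∂(P.κ (decide ((z : EReal) < x)) x))
    (hveq : ∀ x, v x = R x (decide ((z : EReal) ≤ x)) +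
      P.β * ∫ y, v y ∂(P.κ (decide ((z : EReal) ≤ x)) x)) (x : ℝ) :
    u x - v x = ({z} : Set ℝ).indicator (fun _ => -P.marginal R u z) x +
      P.β * ∫ y, u y - v y ∂(P.thrKerM z x) := by
  rw [thrKerM_apply, integral_sub (hu _ _) (hv _ _), hueq x, hveq x]
  by_cases hx : x = z
  · subst hx
    simp only [lt_self_iff_false, decide_false, le_refl, decide_true, marginal,
      Set.indicator_of_mem (Set.mem_singleton _)]
    ring
  · rw [Set.indicator_of_notMem (Set.mem_singleton_iff.not.2 hx),
      decide_coe_lt_eq_decide_coe_le hx]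
    ring

theorem integral_sub_eq_jump {p : Measure ℝ} (hp : Integrable P.w p)
    {R : ℝ → Bool → ℝ} {u v : ℝ → ℝ} {z : ℝ} (hu : Measurable u) (hv : Measurable v)
    {Cu Cv : ℝ} (hub : ∀ x, |u x| ≤ Cu * P.w x) (hvb : ∀ x, |v x| ≤ Cv * P.w x)
    (hueq : ∀ x, u x = R x (decide ((z : EReal) < x)) +
      P.β * ∫ y, u y ∂(P.κ (decide ((z : EReal) < x)) x))
    (hveq : ∀ x, v x = R x (decide ((z : EReal) ≤ x)) +
      P.β * ∫ y, v y ∂(P.κ (decide ((z : EReal) ≤ x)) x)) :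
    ∫ x, u x ∂p - ∫ x, v x ∂p = -(P.marginal R v z * (P.occ z p {z}).toReal) ∧
      ∫ x, u x ∂p - ∫ x, v x ∂p = -(P.marginal R u z * (P.occM z p {z}).toReal) := by
  have hIu : ∀ a x, Integrable u (P.κ a x) := fun a x =>
    integrable_of_abs_le_const_mul hu hub (P.hw_int a x)
  have hIv : ∀ a x, Integrable v (P.κ a x) := fun a x =>
    integrable_of_abs_le_const_mul hv hvb (P.hw_int a x)
  have hDb : ∀ x, |u x - v x| ≤ (Cu + Cv) * P.w x := fun x =>
    (abs_sub _ _).trans (by linarith [hub x, hvb x])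
  have hγ0 : 0 ≤ P.γ := P.hβ0.trans P.hβγ
  rw [← integral_sub (integrable_of_abs_le_const_mul hu hub hp)
    (integrable_of_abs_le_const_mul hv hvb hp), ← neg_mul, ← neg_mul]
  constructor
  · exact integral_eq_mul_sum_discountedLaw P.hβ0 hγ0 P.hγ1 P.hw_meas P.hw_one
      (fun x => by rw [P.thrKer_apply]; exact P.hw_int _ x)
      (fun x => by rw [P.thrKer_apply]; exact P.hw_drift _ x) hp (hu.sub hv) hDb
      (measurableSet_singleton z) (P.sub_eq_indicator_add_thrKer hIu hIv hueq hveq)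
  · exact integral_eq_mul_sum_discountedLaw P.hβ0 hγ0 P.hγ1 P.hw_meas P.hw_one
      (fun x => by rw [P.thrKerM_apply]; exact P.hw_int _ x)
      (fun x => by rw [P.thrKerM_apply]; exact P.hw_drift _ x) hp (hu.sub hv) hDb
      (measurableSet_singleton z) (P.sub_eq_indicator_add_thrKerM hIu hIv hueq hveq)

end Bandit

/-- Jump formulae: `F(p,z) − F(p,z⁻) = −f(z,z⁻)·μ_p^z{z} = −f(z,z)·μ_p^{z⁻}{z}`
and similarly for `G` and `g`. -/
theorem jump_formulae (P : Bandit) (p : Measure ℝ) (hp : P.IsInitDist p)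
    (z : ℝ) :
    (P.Fp p z - P.Fmp p z = -(P.fm z z * (P.occ z p {z}).toReal) ∧
      P.Fp p z - P.Fmp p z = -(P.f z z * (P.occM z p {z}).toReal)) ∧
    (P.Gp p z - P.Gmp p z = -(P.gm z z * (P.occ z p {z}).toReal) ∧
      P.Gp p z - P.Gmp p z = -(P.g z z * (P.occM z p {z}).toReal)) := by
  obtain ⟨CF, hCF⟩ := P.hF_bdd z
  obtain ⟨CFm, hCFm⟩ := P.hFm_bdd z
  obtain ⟨CG, hCG⟩ := P.hG_bdd z
  obtain ⟨CGm, hCGm⟩ := P.hGm_bdd z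
  exact ⟨P.integral_sub_eq_jump hp.2 (P.hF_meas z) (P.hFm_meas z) hCF hCFm
      (fun x => P.hF_eq x z) (fun x => P.hFm_eq x z),
    P.integral_sub_eq_jump hp.2 (P.hG_meas z) (P.hGm_meas z) hCG hCGm
      (fun x => P.hG_eq x z) (fun x => P.hGm_eq x z)⟩
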